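/- arXiv:1707.05892 — 2 statements merged into one kernel-verified Lean document; each statement's English description precedes it below -/
import Mathlib

section
/- Let (X,μ,f) be an ergodic measure-preserving system on a probability space and let a_n^{(1)}, …, a_n^{(m)} be subadditive cocycles over f, each a_n^{(j)} integrable, whose exponents λ^{(1)}, …, λ^{(m)} (where λ^{(j)} = lim_{n→∞} (1/n)∫a_n^{(j)} dμ) are all finite. Then there exists a set E ⊆ X with μ(E) = 1 such that for each x ∈ E and each ε > 0 there is an integer L = L(x,ε) for which the set of integers n satisfying, simultaneously for every j = 1,…,m, a_n^{(j)}(x) − a_{n−i}^{(j)}(f^i x) ≥ (λ^{(j)} − ε)·i for all integers i with L ≤ i ≤ n, is infinite. -/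
/-!
Put `Λ = ∑ⱼ λⱼ` and, for `δ > 0`, consider the subadditive cocycle `b n = ∑ⱼ aⱼ n - (Λ - δ) n`,
whose exponent is `δ > 0`. Its running maximum `Φ N x = max_{k ≤ N} b (N - k) (fᵏ x)` satisfies
`∫ Φ N ≥ ∫ b N ≥ δ N`, while the increments `Φ (N + 1) - Φ N ∘ f`, whose integrals telescope, are
nonnegative and dominated by `(b 1)⁺`. By dominated convergence they cannot tend to `0` almost
everywhere, so on a set of positive measure there are infinitely many record times `N`, at which
`b N x ≥ b (N - k) (fᵏ x)` for all `k ≤ N`. Up to an additive constant this property passes from `x`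
to `f x`, so by ergodicity it holds almost everywhere.

At such a time the differences `aⱼ N x - aⱼ (N - i) (fⁱ x)` add up to at least `(Λ - δ) i - c`, and
each of them is at most `aⱼ i x ≤ (λⱼ + δ) i` for large `i` by Kingman's upper bound (itself a
consequence of the maximal ergodic theorem). Hence each is at least `(λⱼ - (m + 1) δ) i` once
`i ≥ c / δ`.
-/

open MeasureTheory Filter Set Function Topology

section Birkhoff

variable {X : Type*} {f : X → X} {g : X → ℝ}

theorem birkhoffSum_const (f : X → X) (c : ℝ) (n : ℕ) (x : X) :
    birkhoffSum f (fun _ ↦ c) n x = n * c := by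
  simp [birkhoffSum]

theorem sum_birkhoffSum_iterate (f : X → X) (g : X → ℝ) (n Q : ℕ) (x : X) :
    ∑ j ∈ Finset.range n, birkhoffSum f^[n] g Q (f^[j] x) = birkhoffSum f g (Q * n) x := by
  induction Q with
  | zero => simp
  | succ Q ih =>
    simp only [birkhoffSum_succ, Finset.sum_add_distrib, ih, add_mul, one_mul, birkhoffSum_add]
    congr 1
    refine Finset.sum_congr rfl fun j _ ↦ ?_
    rw [← iterate_mul, ← iterate_add_apply, ← iterate_add_apply, mul_comm, add_comm]

noncomputable def birkhoffMax (f : X → X) (g : X → ℝ) : ℕ → X → ℝ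
  | 0 => 0
  | N + 1 => fun x ↦ max (birkhoffMax f g N x) (birkhoffSum f g (N + 1) x)

theorem monotone_birkhoffMax : Monotone (birkhoffMax f g) :=
  monotone_nat_of_le_succ fun _ _ ↦ le_max_left _ _

theorem birkhoffSum_le_birkhoffMax {n N : ℕ} (h : n ≤ N) (x : X) :
    birkhoffSum f g n x ≤ birkhoffMax f g N x := by
  induction N with
  | zero => simp [Nat.le_zero.1 h, birkhoffMax]
  | succ N ih =>
    rcases h.eq_or_lt with rfl | h
    · exact le_max_right _ _
    · exact (ih (Nat.lt_succ_iff.1 h)).trans (le_max_left _ _)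

theorem exists_pos_birkhoffSum_of_pos_birkhoffMax {N : ℕ} {x : X}
    (h : 0 < birkhoffMax f g N x) : ∃ n, 0 < birkhoffSum f g n x := by
  induction N with
  | zero => exact absurd h (lt_irrefl 0)
  | succ N ih => exact (lt_max_iff.1 h).elim ih (⟨N + 1, ·⟩)

theorem birkhoffMax_le_max_add (N : ℕ) (x : X) :
    birkhoffMax f g N x ≤ max 0 (g x + birkhoffMax f g N (f x)) := by
  induction N with
  | zero => exact le_max_left _ _
  | succ N ih =>
    refine max_le (ih.trans ?_) ?_
    · gcongr
      exact monotone_birkhoffMax N.le_succ _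
    · rw [birkhoffSum_succ']
      exact le_max_of_le_right (by gcongr; exact birkhoffSum_le_birkhoffMax N.le_succ _)

end Birkhoff

section MaximalErgodic

variable {X : Type*} [MeasurableSpace X] {μ : Measure X} {f : X → X} {g : X → ℝ}

theorem MeasureTheory.MeasurePreserving.integral_comp_of_aestronglyMeasurable {Y : Type*}
    [MeasurableSpace Y] {ν : Measure Y} {φ : X → Y} {h : Y → ℝ} (hφ : MeasurePreserving φ μ ν)
    (hh : AEStronglyMeasurable h ν) : ∫ x, h (φ x) ∂μ = ∫ y, h y ∂ν := by
  rw [← integral_map hφ.aemeasurable (by rwa [hφ.map_eq]), hφ.map_eq]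

theorem integrable_birkhoffSum (hf : MeasurePreserving f μ μ) (hg : Integrable g μ) (n : ℕ) :
    Integrable (birkhoffSum f g n) μ :=
  integrable_finsetSum _ fun i _ ↦ (hf.iterate i).integrable_comp_of_integrable hg

theorem integral_birkhoffSum (hf : MeasurePreserving f μ μ) (hg : Integrable g μ) (n : ℕ) :
    ∫ x, birkhoffSum f g n x ∂μ = n * ∫ x, g x ∂μ := by
  have hgi (i : ℕ) : Integrable (fun x ↦ g (f^[i] x)) μ :=
    (hf.iterate i).integrable_comp_of_integrable hg
  simp only [birkhoffSum]
  rw [integral_finsetSum _ fun i _ ↦ hgi i]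
  simp [(hf.iterate _).integral_comp_of_aestronglyMeasurable hg.1]

theorem measurable_birkhoffMax (hf : Measurable f) (hg : Measurable g) (N : ℕ) :
    Measurable (birkhoffMax f g N) := by
  induction N with
  | zero => exact measurable_const
  | succ N ih => exact ih.max (Finset.measurable_sum _ fun i _ ↦ hg.comp (hf.iterate i))

theorem integrable_birkhoffMax (hf : MeasurePreserving f μ μ) (hg : Integrable g μ) (N : ℕ) :
    Integrable (birkhoffMax f g N) μ := by
  induction N with
  | zero => exact integrable_zero _ _ _
  | succ N ih => exact ih.sup (integrable_birkhoffSum hf hg _)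

theorem setIntegral_pos_birkhoffMax_nonneg (hf : MeasurePreserving f μ μ) (hg : Integrable g μ)
    (hgm : Measurable g) (N : ℕ) : 0 ≤ ∫ x in {x | 0 < birkhoffMax f g N x}, g x ∂μ := by
  set M := birkhoffMax f g N
  set A := {x | 0 < M x}
  have hA : MeasurableSet A :=
    measurableSet_lt measurable_const (measurable_birkhoffMax hf.measurable hgm N)
  have hM := integrable_birkhoffMax hf hg N
  have hMf : Integrable (fun x ↦ M (f x)) μ := hf.integrable_comp_of_integrable hM
  have hM_nonneg : ∀ x, 0 ≤ M x := fun x ↦ birkhoffSum_le_birkhoffMax N.zero_le x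
  -- on `A` the maximum is attained at some `n ≥ 1`, where `S_n g x = g x + S_{n-1} g (f x)`
  have hM_le : ∀ x ∈ A, M x ≤ g x + M (f x) := fun x hx ↦
    (le_max_iff.1 (birkhoffMax_le_max_add N x)).resolve_left (not_le.2 hx)
  have key : ∫ x, M x ∂μ ≤ (∫ x in A, g x ∂μ) + ∫ x, M x ∂μ := calc
    ∫ x, M x ∂μ = ∫ x in A, M x ∂μ :=
        (setIntegral_eq_integral_of_forall_compl_eq_zero fun x hx ↦
          le_antisymm (not_lt.1 hx) (hM_nonneg x)).symm
    _ ≤ ∫ x in A, (g x + M (f x)) ∂μ :=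
        setIntegral_mono_on hM.integrableOn (hg.add hMf).integrableOn hA hM_le
    _ = (∫ x in A, g x ∂μ) + ∫ x in A, M (f x) ∂μ :=
        integral_add hg.integrableOn hMf.integrableOn
    _ ≤ (∫ x in A, g x ∂μ) + ∫ x, M (f x) ∂μ := by
        gcongr
        · exact Eventually.of_forall fun x ↦ hM_nonneg _
        · exact Measure.restrict_le_self
    _ = (∫ x in A, g x ∂μ) + ∫ x, M x ∂μ := by
        rw [hf.integral_comp_of_aestronglyMeasurable hM.1]
  linarith

/-- Garsia's maximal ergodic theorem. -/
theorem setIntegral_exists_pos_birkhoffSum_nonneg (hf : MeasurePreserving f μ μ)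
    (hg : Integrable g μ) (hgm : Measurable g) :
    0 ≤ ∫ x in {x | ∃ n, 0 < birkhoffSum f g n x}, g x ∂μ := by
  have hU : {x | ∃ n, 0 < birkhoffSum f g n x} = ⋃ N, {x | 0 < birkhoffMax f g N x} := by
    ext x
    simp only [mem_iUnion]
    exact ⟨fun ⟨n, hn⟩ ↦ ⟨n, hn.trans_le (birkhoffSum_le_birkhoffMax le_rfl x)⟩,
      fun ⟨_, hN⟩ ↦ exists_pos_birkhoffSum_of_pos_birkhoffMax hN⟩
  rw [hU]
  exact ge_of_tendsto' (tendsto_setIntegral_of_monotone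
    (fun N ↦ measurableSet_lt measurable_const (measurable_birkhoffMax hf.measurable hgm N))
    (fun N N' h x (hx : 0 < _) ↦ hx.trans_le (monotone_birkhoffMax h x)) hg.integrableOn)
    (setIntegral_pos_birkhoffMax_nonneg hf hg hgm)

end MaximalErgodic

section BirkhoffBound

variable {X : Type*} [MeasurableSpace X] {μ : Measure X} {f : X → X} {g : X → ℝ}

theorem ae_bddAbove_birkhoffSum_of_integral_neg [IsFiniteMeasure μ] (hf : Ergodic f μ) (hg : Integrable g μ)
    (hgm : Measurable g) (hneg : ∫ x, g x ∂μ < 0) :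
    ∀ᵐ x ∂μ, BddAbove (range fun n ↦ birkhoffSum f g n x) := by
  set U := {x | BddAbove (range fun n ↦ birkhoffSum f g n x)}
  have hU : MeasurableSet U := measurableSet_bddAbove_range fun n ↦
    Finset.measurable_sum _ fun i _ ↦ hgm.comp (hf.measurable.iterate i)
  have hUf : U ⊆ f ⁻¹' U := fun x ⟨C, hC⟩ ↦ ⟨C - g x, forall_mem_range.2 fun n ↦ by
    have := hC (mem_range_self (n + 1))
    rw [birkhoffSum_succ'] at this
    linarith⟩
  rcases hf.ae_empty_or_univ_of_ae_le_preimage hU.nullMeasurableSet hUf.eventuallyLE with h | h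
  · -- off `U` some Birkhoff sum is positive, so the maximal ergodic theorem gives `0 ≤ ∫ g`
    have hA : ∀ᵐ x ∂μ, x ∈ {x | ∃ n, 0 < birkhoffSum f g n x} := by
      filter_upwards [h.mem_iff] with x hx
      obtain ⟨_, ⟨n, rfl⟩, hn⟩ := not_bddAbove_iff.1 (hx.not.2 (notMem_empty x)) 0
      exact ⟨n, hn⟩
    have := setIntegral_exists_pos_birkhoffSum_nonneg hf.toMeasurePreserving hg hgm
    rw [Measure.restrict_eq_self_of_ae_mem hA] at this
    linarith
  · filter_upwards [h.mem_iff] with x hx using hx.2 trivial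

theorem ae_exists_birkhoffSum_le [IsProbabilityMeasure μ] (hf : Ergodic f μ) (hg : Integrable g μ) {β : ℝ}
    (hβ : ∫ x, g x ∂μ < β) : ∀ᵐ x ∂μ, ∃ C, ∀ n, birkhoffSum f g n x ≤ β * n + C := by
  set g' := hg.1.mk g
  have hg' : Integrable g' μ := hg.congr hg.1.ae_eq_mk
  have hbdd := ae_bddAbove_birkhoffSum_of_integral_neg hf (hg'.sub (integrable_const β))
    (hg.1.stronglyMeasurable_mk.measurable.sub measurable_const) (by
      rw [Pi.sub_def, integral_sub hg' (integrable_const β), ← integral_congr_ae hg.1.ae_eq_mk]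
      simpa using hβ)
  have heq : ∀ᵐ x ∂μ, ∀ n, birkhoffSum f g n x = birkhoffSum f g' n x := ae_all_iff.2 fun n ↦
    hf.toMeasurePreserving.quasiMeasurePreserving.birkhoffSum_ae_eq_of_ae_eq hg.1.ae_eq_mk n
  filter_upwards [hbdd, heq] with x ⟨C, hC⟩ hx
  refine ⟨C, fun n ↦ ?_⟩
  have := hC (mem_range_self n)
  rw [birkhoffSum_sub, birkhoffSum_const] at this
  linarith [hx n]

end BirkhoffBound

theorem Subadditive.le_div_of_tendsto {u : ℕ → ℝ} (h : Subadditive u) {l : ℝ}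
    (hl : Tendsto (fun n ↦ u n / n) atTop (𝓝 l)) {n : ℕ} (hn : n ≠ 0) : l ≤ u n / n := by
  by_contra! hlt
  obtain ⟨L, hnL, hLl⟩ := exists_between hlt
  obtain ⟨p, hp, hp'⟩ :=
    ((h.eventually_div_lt_of_div_lt hn hnL).and (hl.eventually (lt_mem_nhds hLl))).exists
  exact hp.not_gt hp'

structure IsSubadditiveCocycle {X : Type*} (f : X → X) (a : ℕ → X → ℝ) : Prop where
  zero : ∀ x, a 0 x = 0
  le_add : ∀ x k n, a (n + k) x ≤ a k x + a n (f^[k] x)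

namespace IsSubadditiveCocycle

section Pointwise

variable {X : Type*} {f : X → X} {a : ℕ → X → ℝ}

theorem sum {ι : Type*} (s : Finset ι) {a : ι → ℕ → X → ℝ}
    (ha : ∀ i ∈ s, IsSubadditiveCocycle f (a i)) :
    IsSubadditiveCocycle f fun n x ↦ ∑ i ∈ s, a i n x where
  zero x := Finset.sum_eq_zero fun i hi ↦ (ha i hi).zero x
  le_add x k n := by
    rw [← Finset.sum_add_distrib]
    exact Finset.sum_le_sum fun i hi ↦ (ha i hi).le_add x k n

theorem sub_birkhoffSum (ha : IsSubadditiveCocycle f a) (p : X → ℝ) :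
    IsSubadditiveCocycle f fun n x ↦ a n x - birkhoffSum f p n x where
  zero x := by simp [ha.zero]
  le_add x k n := by
    have := ha.le_add x k n
    rw [add_comm n k] at this ⊢
    rw [birkhoffSum_add]
    linarith

theorem le_birkhoffSum (ha : IsSubadditiveCocycle f a) (k : ℕ) (x : X) :
    a k x ≤ birkhoffSum f (fun y ↦ max (a 1 y) 0) k x := by
  induction k generalizing x with
  | zero => simp [ha.zero]
  | succ k ih =>
    rw [birkhoffSum_succ']
    have := ha.le_add x 1 k
    rw [iterate_one] at this
    linarith [le_max_left (a 1 x) 0, ih (f x)]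

theorem le_birkhoffSum_iterate (ha : IsSubadditiveCocycle f a) (hneg : ∀ k x, a k x ≤ 0)
    {n Q ℓ : ℕ} (h : Q * n ≤ ℓ) (x : X) : a ℓ x ≤ birkhoffSum f^[n] (a n) Q x := by
  induction Q generalizing ℓ x with
  | zero => simpa using hneg ℓ x
  | succ Q ih =>
    obtain ⟨ℓ, rfl⟩ : ∃ ℓ', ℓ = ℓ' + n := ⟨ℓ - n, by rw [add_mul] at h; omega⟩
    rw [birkhoffSum_succ']
    have := ih (ℓ := ℓ) (by rw [add_mul] at h; omega) (f^[n] x)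
    linarith [ha.le_add x n ℓ]

/-- The phase-averaged block decomposition behind Kingman's upper bound: cut `[0, k)` into
`[0, j)`, `Q` blocks of length `n` and a final piece, for each phase `j < n`, and discard the final
piece using `a ≤ 0`. -/
theorem mul_le_sum_add_birkhoffSum (ha : IsSubadditiveCocycle f a) (hneg : ∀ k x, a k x ≤ 0)
    {n Q k : ℕ} (h : (Q + 1) * n ≤ k) (x : X) :
    n * a k x ≤ ∑ j ∈ Finset.range n, a j x + birkhoffSum f (a n) (Q * n) x := by
  rw [← sum_birkhoffSum_iterate, ← Finset.sum_add_distrib]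
  have hphase : ∀ j ∈ Finset.range n, a k x ≤ a j x + birkhoffSum f^[n] (a n) Q (f^[j] x) := by
    intro j hj
    have hj := Finset.mem_range.1 hj
    rw [add_mul, one_mul] at h
    obtain ⟨ℓ, rfl⟩ : ∃ ℓ, k = ℓ + j := ⟨k - j, by omega⟩
    exact (ha.le_add x j ℓ).trans
      (add_le_add_right (ha.le_birkhoffSum_iterate hneg (by omega) _) _)
  simpa using Finset.sum_le_sum hphase

/-- Subtracting `birkhoffSum f (a 1)⁺` makes the cocycle nonpositive, so that
`mul_le_sum_add_birkhoffSum` applies to it. -/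
theorem eventually_le_mul_of_birkhoffSum_le (ha : IsSubadditiveCocycle f a) {n : ℕ} (hn : n ≠ 0)
    {x : X} {β γ L C₁ C₂ : ℝ}
    (h₁ : ∀ m, birkhoffSum f (fun y ↦ a n y - birkhoffSum f (fun z ↦ max (a 1 z) 0) n y) m x ≤
      β * m + C₁)
    (h₂ : ∀ k, birkhoffSum f (fun z ↦ max (a 1 z) 0) k x ≤ γ * k + C₂)
    (hL : β + n * γ < n * L) : ∀ᶠ k in atTop, a k x ≤ L * k := by
  set p : X → ℝ := fun z ↦ max (a 1 z) 0
  set b : ℕ → X → ℝ := fun k y ↦ a k y - birkhoffSum f p k y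
  have hb_nonpos : ∀ k y, b k y ≤ 0 := fun k y ↦ sub_nonpos.2 (ha.le_birkhoffSum k y)
  have hn0 : (0 : ℝ) < n := by positivity
  set D := ∑ j ∈ Finset.range n, b j x + C₁ + 2 * n * |β| + n * C₂
  have hbound : ∀ k, n ≤ k → n * a k x ≤ (β + n * γ) * k + D := by
    intro k hk
    set Q := k / n - 1
    have hQ : Q + 1 = k / n := Nat.sub_add_cancel (Nat.div_pos hk (Nat.pos_of_ne_zero hn))
    have hQk : (Q + 1) * n ≤ k := hQ ▸ Nat.div_mul_le_self k n
    have hkQ : k < (Q + 1) * n + n := hQ ▸ Nat.lt_div_mul_add (Nat.pos_of_ne_zero hn)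
    set m := Q * n
    have hm : (Q + 1) * n = m + n := by ring
    have hmk : (m : ℝ) ≤ k := by exact_mod_cast (by omega : m ≤ k)
    have hkm : (k : ℝ) ≤ m + 2 * n := by exact_mod_cast (by omega : k ≤ m + 2 * n)
    have hphase := (ha.sub_birkhoffSum p).mul_le_sum_add_birkhoffSum hb_nonpos hQk x
    have hβ : β * m ≤ β * k + 2 * n * |β| := by nlinarith [neg_abs_le β, abs_nonneg β]
    have hpk := mul_le_mul_of_nonneg_left (h₂ k) hn0.le
    have hbk : b k x = a k x - birkhoffSum f p k x := rfl
    nlinarith [h₁ m]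
  have hev : ∀ᶠ k : ℕ in atTop, D ≤ (n * L - (β + n * γ)) * k :=
    (tendsto_natCast_atTop_atTop.const_mul_atTop (by linarith)).eventually_ge_atTop D
  filter_upwards [eventually_ge_atTop n, hev] with k hk hD
  have := hbound k hk
  exact le_of_mul_le_mul_left (by linarith : (n : ℝ) * a k x ≤ n * (L * k)) hn0

end Pointwise

section Integral

variable {X : Type*} [MeasurableSpace X] {μ : Measure X} {f : X → X} {a : ℕ → X → ℝ}

theorem subadditive_integral (hf : MeasurePreserving f μ μ) (ha : IsSubadditiveCocycle f a)
    (hint : ∀ n, Integrable (a n) μ) : Subadditive fun n ↦ ∫ x, a n x ∂μ := by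
  intro m n
  have hcomp : Integrable (fun x ↦ a n (f^[m] x)) μ :=
    (hf.iterate m).integrable_comp_of_integrable (hint n)
  calc ∫ x, a (m + n) x ∂μ ≤ ∫ x, (a m x + a n (f^[m] x)) ∂μ :=
        integral_mono (hint _) ((hint m).add hcomp) fun x ↦ add_comm m n ▸ ha.le_add x m n
    _ = ∫ x, a m x ∂μ + ∫ x, a n x ∂μ := by
        rw [integral_add (hint m) hcomp,
          (hf.iterate m).integral_comp_of_aestronglyMeasurable (hint n).1]

theorem mul_le_integral (hf : MeasurePreserving f μ μ) (ha : IsSubadditiveCocycle f a)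
    (hint : ∀ n, Integrable (a n) μ) {lam : ℝ}
    (hlam : Tendsto (fun n : ℕ ↦ (n : ℝ)⁻¹ * ∫ x, a n x ∂μ) atTop (𝓝 lam)) (n : ℕ) :
    lam * n ≤ ∫ x, a n x ∂μ := by
  rcases eq_or_ne n 0 with rfl | hn
  · simp [ha.zero]
  · have := (ha.subadditive_integral hf hint).le_div_of_tendsto
      (by simpa only [div_eq_inv_mul] using hlam) hn
    rwa [le_div_iff₀ (by positivity)] at this

variable [IsProbabilityMeasure μ]

/-- Kingman's upper bound. -/
theorem ae_eventually_le_mul_of_integral_lt (hf : Ergodic f μ) (ha : IsSubadditiveCocycle f a)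
    (hint : ∀ n, Integrable (a n) μ) {n : ℕ} (hn : n ≠ 0) {L : ℝ}
    (hL : ∫ x, a n x ∂μ < L * n) : ∀ᵐ x ∂μ, ∀ᶠ k in atTop, a k x ≤ L * k := by
  set p : X → ℝ := fun y ↦ max (a 1 y) 0
  have hp : Integrable p μ := (hint 1).pos_part
  have hpn := integrable_birkhoffSum hf.toMeasurePreserving hp n
  set s := (L * n - ∫ x, a n x ∂μ) / (2 * (n + 1))
  have hs : 0 < s := div_pos (by linarith) (by positivity)
  have hs' : s * (2 * (n + 1)) = L * n - ∫ x, a n x ∂μ := div_mul_cancel₀ _ (by positivity)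
  filter_upwards [ae_exists_birkhoffSum_le hf ((hint n).sub hpn) (lt_add_of_pos_right _ hs),
    ae_exists_birkhoffSum_le hf hp (lt_add_of_pos_right _ hs)] with x ⟨C₁, hC₁⟩ ⟨C₂, hC₂⟩
  refine ha.eventually_le_mul_of_birkhoffSum_le hn hC₁ hC₂ ?_
  rw [Pi.sub_def, integral_sub (hint n) hpn, integral_birkhoffSum hf.toMeasurePreserving hp]
  linarith

theorem ae_eventually_le_mul (hf : Ergodic f μ) (ha : IsSubadditiveCocycle f a)
    (hint : ∀ n, Integrable (a n) μ) {lam : ℝ}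
    (hlam : Tendsto (fun n : ℕ ↦ (n : ℝ)⁻¹ * ∫ x, a n x ∂μ) atTop (𝓝 lam)) {L : ℝ}
    (hL : lam < L) : ∀ᵐ x ∂μ, ∀ᶠ k in atTop, a k x ≤ L * k := by
  obtain ⟨n, hnL, hn⟩ := ((hlam.eventually (gt_mem_nhds hL)).and (eventually_ne_atTop 0)).exists
  refine ha.ae_eventually_le_mul_of_integral_lt hf hint hn ?_
  rwa [inv_mul_lt_iff₀ (by positivity), mul_comm] at hnL

end Integral

end IsSubadditiveCocycle

section RunningMax

variable {X : Type*} {f : X → X} {b : ℕ → X → ℝ}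

/-- `runningMax f b N x = max_{k ≤ N} b (N - k) (f^[k] x)`. -/
noncomputable def runningMax (f : X → X) (b : ℕ → X → ℝ) : ℕ → X → ℝ
  | 0 => b 0
  | N + 1 => fun x ↦ max (b (N + 1) x) (runningMax f b N (f x))

theorem le_runningMax {k N : ℕ} (h : k ≤ N) (x : X) :
    b (N - k) (f^[k] x) ≤ runningMax f b N x := by
  induction N generalizing k x with
  | zero => simp [Nat.le_zero.1 h, runningMax]
  | succ N ih =>
    rcases k with _ | k
    · exact le_max_left _ _
    · rw [Nat.add_sub_add_right, iterate_succ_apply]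
      exact (ih (Nat.le_of_succ_le_succ h) (f x)).trans (le_max_right _ _)

theorem runningMax_succ_sub_nonneg (N : ℕ) (x : X) :
    0 ≤ runningMax f b (N + 1) x - runningMax f b N (f x) :=
  sub_nonneg.2 (le_max_right _ _)

theorem runningMax_succ_sub_le (hb : IsSubadditiveCocycle f b) (N : ℕ) (x : X) :
    runningMax f b (N + 1) x - runningMax f b N (f x) ≤ max (b 1 x) 0 := by
  have h₁ := hb.le_add x 1 N
  have h₂ : b N (f x) ≤ runningMax f b N (f x) := le_runningMax N.zero_le (f x)
  rw [iterate_one] at h₁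
  rw [sub_le_iff_le_add]
  exact max_le (by linarith [le_max_left (b 1 x) 0]) (by linarith [le_max_right (b 1 x) 0])

def IsGoodTime (f : X → X) (b : ℕ → X → ℝ) (c : ℝ) (x : X) (N : ℕ) : Prop :=
  ∀ k ≤ N, b (N - k) (f^[k] x) ≤ b N x + c

theorem isGoodTime_zero_of_runningMax_lt {N : ℕ} {x : X}
    (h : runningMax f b N (f x) < runningMax f b (N + 1) x) : IsGoodTime f b 0 x (N + 1) := by
  have : runningMax f b (N + 1) x = b (N + 1) x :=
    max_eq_left (le_of_lt (by simpa [runningMax] using h))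
  exact fun k hk ↦ by simpa [← this] using le_runningMax (f := f) (b := b) hk x

theorem IsGoodTime.shift (hb : IsSubadditiveCocycle f b) {c : ℝ} {x : X} {N : ℕ}
    (h : IsGoodTime f b c x (N + 1)) : IsGoodTime f b (c + b 1 x) (f x) N := by
  intro k hk
  have h₁ := h (k + 1) (by omega)
  have h₂ := hb.le_add x 1 N
  rw [iterate_succ_apply, Nat.add_sub_add_right] at h₁
  rw [iterate_one] at h₂
  linarith

end RunningMax

section RunningMaxMeasure

variable {X : Type*} [MeasurableSpace X] {μ : Measure X} {f : X → X} {b : ℕ → X → ℝ}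

theorem integrable_runningMax (hf : MeasurePreserving f μ μ) (hint : ∀ n, Integrable (b n) μ)
    (N : ℕ) : Integrable (runningMax f b N) μ := by
  induction N with
  | zero => exact hint 0
  | succ N ih => exact (hint (N + 1)).sup (hf.integrable_comp_of_integrable ih)

theorem nullMeasurableSet_exists_frequently_isGoodTime (hf : MeasurePreserving f μ μ)
    (hint : ∀ n, Integrable (b n) μ) :
    NullMeasurableSet {x | ∃ c : ℕ, ∃ᶠ N in atTop, IsGoodTime f b c x N} μ := by
  simp only [IsGoodTime, frequently_atTop, ofPred_exists, ofPred_forall, ofPred_and]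
  refine .iUnion fun c ↦ .iInter fun M ↦ .iUnion fun N ↦
    .inter (MeasurableSet.const _).nullMeasurableSet <| .iInter fun k ↦ .iInter fun _ ↦
      nullMeasurableSet_le ?_ ((hint N).1.aemeasurable.add_const _)
  exact (hint _).1.aemeasurable.comp_quasiMeasurePreserving (hf.iterate k).quasiMeasurePreserving

end RunningMaxMeasure

namespace IsSubadditiveCocycle

variable {X : Type*} [MeasurableSpace X] {μ : Measure X} {f : X → X} {b : ℕ → X → ℝ}

/-- `runningMax f b N (f x) < runningMax f b (N + 1) x` says that `b (N + 1) x` exceeds every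
`b (N - k) (f^[k + 1] x)`. If almost no point had infinitely many such records, the increments
`runningMax f b (N + 1) - runningMax f b N ∘ f`, dominated by `(b 1)⁺`, would tend to `0` almost
everywhere, hence in `L¹`; but their Cesàro means `(∫ runningMax f b N) / N` are at least `ν`. -/
theorem frequently_ae_frequently_runningMax_lt (hf : MeasurePreserving f μ μ)
    (hb : IsSubadditiveCocycle f b) (hint : ∀ n, Integrable (b n) μ) {ν : ℝ} (hν : 0 < ν)
    (hνb : ∀ n, ν * n ≤ ∫ x, b n x ∂μ) :
    ∃ᵐ x ∂μ, ∃ᶠ N in atTop, runningMax f b N (f x) < runningMax f b (N + 1) x := by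
  set d : ℕ → X → ℝ := fun N x ↦ runningMax f b (N + 1) x - runningMax f b N (f x)
  have hR := integrable_runningMax hf hint
  have hRf (N : ℕ) : Integrable (fun x ↦ runningMax f b N (f x)) μ :=
    hf.integrable_comp_of_integrable (hR N)
  have hd_int (N : ℕ) :
      ∫ x, d N x ∂μ = ∫ x, runningMax f b (N + 1) x ∂μ - ∫ x, runningMax f b N x ∂μ := by
    rw [integral_sub (hR (N + 1)) (hRf N), hf.integral_comp_of_aestronglyMeasurable (hR N).1]
  by_contra h
  rw [not_frequently] at h
  have hd_lim : ∀ᵐ x ∂μ, Tendsto (fun N ↦ d N x) atTop (𝓝 0) := by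
    filter_upwards [h] with x hx
    rw [not_frequently] at hx
    exact tendsto_const_nhds.congr' (hx.mono fun N hN ↦
      (le_antisymm (sub_nonpos.2 (not_lt.1 hN)) (runningMax_succ_sub_nonneg N x)).symm)
  have hlim : Tendsto (fun N ↦ ∫ x, d N x ∂μ) atTop (𝓝 0) := by
    simpa using tendsto_integral_of_dominated_convergence (F := d) (fun x ↦ max (b 1 x) 0)
      (fun N ↦ ((hR (N + 1)).sub (hRf N)).1) (hint 1).pos_part (fun N ↦ ae_of_all _ fun x ↦ by
        rw [Real.norm_eq_abs, abs_of_nonneg (runningMax_succ_sub_nonneg N x)]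
        exact runningMax_succ_sub_le hb N x) hd_lim
  have hmean : ∀ N : ℕ, 1 ≤ N → ν ≤ (N : ℝ)⁻¹ * ∑ M ∈ Finset.range N, ∫ x, d M x ∂μ := by
    intro N hN
    simp only [hd_int]
    rw [Finset.sum_range_sub (fun M ↦ ∫ x, runningMax f b M x ∂μ)]
    have h₀ : ∫ x, runningMax f b 0 x ∂μ = 0 := by simp [runningMax, hb.zero]
    have h₁ : ∫ x, b N x ∂μ ≤ ∫ x, runningMax f b N x ∂μ :=
      integral_mono (hint N) (hR N) fun x ↦ by
        simpa using le_runningMax (f := f) (b := b) N.zero_le x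
    rw [h₀, sub_zero, le_inv_mul_iff₀ (by positivity)]
    linarith [hνb N]
  exact hν.not_ge (ge_of_tendsto hlim.cesaro (eventually_atTop.2 ⟨1, hmean⟩))

variable [IsFiniteMeasure μ]

theorem ae_exists_frequently_isGoodTime (hf : Ergodic f μ) (hb : IsSubadditiveCocycle f b)
    (hint : ∀ n, Integrable (b n) μ) {ν : ℝ} (hν : 0 < ν) (hνb : ∀ n, ν * n ≤ ∫ x, b n x ∂μ) :
    ∀ᵐ x ∂μ, ∃ c : ℕ, ∃ᶠ N in atTop, IsGoodTime f b c x N := by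
  set G := {x | ∃ c : ℕ, ∃ᶠ N in atTop, IsGoodTime f b c x N}
  have hGf : G ⊆ f ⁻¹' G := by
    rintro x ⟨c, hc⟩
    refine ⟨c + ⌈b 1 x⌉₊, ?_⟩
    rw [← map_add_atTop_eq_nat 1, frequently_map] at hc
    refine hc.mono fun N hN k hk ↦ ?_
    have := (hN.shift hb) k hk
    push_cast
    linarith [Nat.le_ceil (b 1 x)]
  rcases hf.ae_empty_or_univ_of_ae_le_preimage
    (nullMeasurableSet_exists_frequently_isGoodTime hf.toMeasurePreserving hint)
    hGf.eventuallyLE with h | h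
  · have hG : ∀ᵐ x ∂μ, x ∉ G := by
      filter_upwards [h.mem_iff] with x hx using hx.not.2 (notMem_empty x)
    obtain ⟨x, hrec, hxG⟩ :=
      ((frequently_ae_frequently_runningMax_lt hf.toMeasurePreserving hb hint hν hνb).and_eventually
        hG).exists
    refine absurd ⟨0, ?_⟩ hxG
    rw [← map_add_atTop_eq_nat 1, frequently_map]
    simpa using hrec.mono fun N ↦ isGoodTime_zero_of_runningMax_lt
  · filter_upwards [h.mem_iff] with x hx using hx.2 trivial

end IsSubadditiveCocycle

theorem exists_measurableSet_measure_eq_one_of_ae {X : Type*} [MeasurableSpace X]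
    {μ : Measure X} [IsProbabilityMeasure μ] {p : X → Prop} (h : ∀ᵐ x ∂μ, p x) :
    ∃ E, MeasurableSet E ∧ μ E = 1 ∧ ∀ x ∈ E, p x :=
  ⟨(toMeasurable μ {x | ¬p x})ᶜ, (measurableSet_toMeasurable _ _).compl, by
    rw [prob_compl_eq_one_iff (measurableSet_toMeasurable _ _), measure_toMeasurable]
    exact ae_iff.1 h, fun _ hx ↦ not_not.1 fun hpx ↦ hx (subset_toMeasurable _ _ hpx)⟩

section Simultaneous

variable {X : Type*} [MeasurableSpace X] {μ : Measure X} [IsProbabilityMeasure μ] {f : X → X}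
  {ι : Type*} [Fintype ι] {a : ι → ℕ → X → ℝ} {lam : ι → ℝ}

theorem ae_exists_frequently_sub_le_sum_sub (hf : Ergodic f μ)
    (ha : ∀ j, IsSubadditiveCocycle f (a j)) (hint : ∀ j n, Integrable (a j n) μ)
    (hlam : ∀ j, Tendsto (fun n : ℕ ↦ (n : ℝ)⁻¹ * ∫ x, a j n x ∂μ) atTop (𝓝 (lam j)))
    {δ : ℝ} (hδ : 0 < δ) :
    ∀ᵐ x ∂μ, ∃ c : ℕ, ∃ᶠ N in atTop, ∀ i ≤ N,
      (∑ j, lam j - δ) * i - c ≤ ∑ j, (a j N x - a j (N - i) (f^[i] x)) := by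
  set Λ := ∑ j, lam j
  set b : ℕ → X → ℝ := fun n x ↦ ∑ j, a j n x - n * (Λ - δ)
  have hb : IsSubadditiveCocycle f b := by
    simpa [birkhoffSum_const] using
      (IsSubadditiveCocycle.sum Finset.univ fun j _ ↦ ha j).sub_birkhoffSum fun _ ↦ Λ - δ
  have hb_int (n : ℕ) : Integrable (b n) μ :=
    (integrable_finsetSum _ fun j _ ↦ hint j n).sub (integrable_const _)
  have hδb (n : ℕ) : δ * n ≤ ∫ x, b n x ∂μ := by
    have := Finset.sum_le_sum fun j (_ : j ∈ Finset.univ) ↦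
      (ha j).mul_le_integral hf.toMeasurePreserving (hint j) (hlam j) n
    rw [← Finset.sum_mul] at this
    rw [integral_sub (integrable_finsetSum _ fun j _ ↦ hint j n) (integrable_const _),
      integral_finsetSum _ fun j _ ↦ hint j n]
    simp only [integral_const, probReal_univ, smul_eq_mul, one_mul]
    linarith
  filter_upwards [hb.ae_exists_frequently_isGoodTime hf hb_int hδ hδb] with x ⟨c, hc⟩
  refine ⟨c, hc.mono fun N hN i hi ↦ ?_⟩
  have := hN i hi
  simp only [b, Nat.cast_sub hi] at this
  rw [Finset.sum_sub_distrib]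
  linarith

theorem ae_exists_frequently_forall_le_sub (hf : Ergodic f μ)
    (ha : ∀ j, IsSubadditiveCocycle f (a j)) (hint : ∀ j n, Integrable (a j n) μ)
    (hlam : ∀ j, Tendsto (fun n : ℕ ↦ (n : ℝ)⁻¹ * ∫ x, a j n x ∂μ) atTop (𝓝 (lam j)))
    {δ : ℝ} (hδ : 0 < δ) :
    ∀ᵐ x ∂μ, ∃ L : ℕ, ∃ᶠ N in atTop, ∀ j i, L ≤ i → i ≤ N →
      (lam j - (Fintype.card ι + 1) * δ) * i ≤ a j N x - a j (N - i) (f^[i] x) := by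
  have hup : ∀ᵐ x ∂μ, ∀ᶠ i in atTop, ∀ j, a j i x ≤ (lam j + δ) * i := by
    filter_upwards [ae_all_iff.2 fun j ↦ (ha j).ae_eventually_le_mul hf (hint j) (hlam j)
      (lt_add_of_pos_right _ hδ)] with x hx using eventually_all.2 hx
  filter_upwards [ae_exists_frequently_sub_le_sum_sub hf ha hint hlam hδ, hup]
    with x ⟨c, hc⟩ hx
  obtain ⟨K, hK⟩ := eventually_atTop.1 hx
  refine ⟨max K ⌈c / δ⌉₊, hc.mono fun N hN j i hi hiN ↦ ?_⟩
  have hci : (c : ℝ) ≤ i * δ := (div_le_iff₀ hδ).1 (Nat.ceil_le.1 (le_of_max_le_right hi))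
  set D : ι → ℝ := fun j ↦ a j N x - a j (N - i) (f^[i] x)
  have hD (j : ι) : D j ≤ (lam j + δ) * i := by
    have := (ha j).le_add x i (N - i)
    rw [Nat.sub_add_cancel hiN] at this
    linarith [hK i (le_of_max_le_left hi) j]
  -- bounding the other summands of `hN i hiN` from above bounds the `j`-th one from below
  have hDj := Finset.single_le_sum (fun k _ ↦ sub_nonneg.2 (hD k)) (Finset.mem_univ j)
  have hU : ∑ k, (lam k + δ) * i = (∑ k, lam k + Fintype.card ι * δ) * i := by
    rw [← Finset.sum_mul, Finset.sum_add_distrib, Finset.sum_const, Finset.card_univ, nsmul_eq_mul]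
  rw [Finset.sum_sub_distrib, hU] at hDj
  nlinarith [hN i hiN]

end Simultaneous

/-- simultaneous Karlsson–Margulis for finitely many integrable subadditive
cocycles `a^{(1)}, …, a^{(m)}` with finite exponents `λ^{(1)}, …, λ^{(m)}`: on a full
measure set `E`, for every `x ∈ E` and `ε > 0` there is `L` such that the set of `n`
satisfying `a^{(j)}_n(x) − a^{(j)}_{n−i}(f^i x) ≥ (λ^{(j)} − ε)·i` for all `L ≤ i ≤ n`
and all `j` simultaneously is infinite. -/
theorem karlsson_margulis_simultaneous {X : Type*} [MeasurableSpace X]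
    (μ : Measure X) [IsProbabilityMeasure μ] (f : X → X) (hf : Ergodic f μ)
    (m : ℕ) (a : Fin m → ℕ → X → ℝ) (ha0 : ∀ j x, a j 0 x = 0)
    (hsub : ∀ (j : Fin m) (x : X) (k n : ℕ), a j (n + k) x ≤ a j k x + a j n (f^[k] x))
    (hint : ∀ j n, Integrable (a j n) μ) (lam : Fin m → ℝ)
    (hlam : ∀ j, Tendsto (fun n : ℕ => (n : ℝ)⁻¹ * ∫ x, a j n x ∂μ) atTop (nhds (lam j))) :
    ∃ E : Set X, MeasurableSet E ∧ μ E = 1 ∧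
      ∀ x ∈ E, ∀ ε > (0 : ℝ), ∃ L : ℕ,
        {n : ℕ | ∀ j : Fin m, ∀ i : ℕ, L ≤ i → i ≤ n →
          (lam j - ε) * (i : ℝ) ≤ a j n x - a j (n - i) (f^[i] x)}.Infinite := by
  have ha (j : Fin m) : IsSubadditiveCocycle f (a j) := ⟨ha0 j, hsub j⟩
  obtain ⟨E, hE, hE1, hEgood⟩ := exists_measurableSet_measure_eq_one_of_ae <|
    ae_all_iff.2 fun r : ℕ ↦ ae_exists_frequently_forall_le_sub hf ha hint hlam
      (Nat.one_div_pos_of_nat (n := r))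
  refine ⟨E, hE, hE1, fun x hx ε hε ↦ ?_⟩
  obtain ⟨r, hr⟩ := ((tendsto_one_div_add_atTop_nhds_zero_nat.const_mul
    (Fintype.card (Fin m) + 1 : ℝ)).eventually (gt_mem_nhds (by simpa using hε))).exists
  obtain ⟨L, hL⟩ := hEgood x hx r
  refine ⟨L, Nat.frequently_atTop_iff_infinite.1 (hL.mono fun N hN j i hLi hiN ↦ ?_)⟩
  exact (mul_le_mul_of_nonneg_right (by linarith) i.cast_nonneg).trans (hN j i hLi hiN)
end

section
/- Let f : X → X be a bijection of a set X, A : X → GL(d,ℝ) a map with cocycle A^n_x (n ∈ ℤ), λ ∈ ℝ, ε > 0, and x ∈ X. Let u ∈ ℝ^d be a vector such that the series S_0(u) := Σ_{n∈ℤ} ‖A^n_x u‖²·e^{−2λn − ε|n|} converges, and for k ∈ ℤ set S_k(u) := Σ_{n∈ℤ} ‖A^n_{f^k x}(A^k_x u)‖²·e^{−2λn − ε|n|} (which then also converges, since A^n_{f^k x} ∘ A^k_x = A^{n+k}_x). Then for every k ∈ ℤ: e^{kλ − ε|k|}·√S_0(u) ≤ √S_k(u) ≤ e^{kλ + ε|k|}·√S_0(u).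 -/
/-!
Since `A^n_{f^k x} ∘ A^k_x = A^{n+k}_x`, the sum `S_k(u)` is `S_0(u)` reindexed by `n ↦ n + k`
with the weight `w(n) = e^{-2λn-ε|n|}` replaced by `w(n - k)`. By the triangle inequality
`|n| - |k| ≤ |n - k| ≤ |n| + |k|`, the ratio `w(n - k) / w(n)` lies between `e^{2kλ-ε|k|}` and
`e^{2kλ+ε|k|}`, so `S_k(u)` is comparable to `S_0(u)` with these constants; taking square roots
halves the exponents, which is stronger than claimed.
-/

/-- The cocycle generated by `A : X → GL(d,ℝ)` over `f`. -/
noncomputable def cocycle {X : Type*} {V : Type*} [NormedAddCommGroup V] [NormedSpace ℝ V]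
    (f : X → X) (A : X → (V →L[ℝ] V)ˣ) : ℕ → X → (V →L[ℝ] V)ˣ
  | 0, _ => 1
  | n + 1, x => cocycle f A n (f x) * A x

/-- The two-sided cocycle: `A^n_x` for `n ∈ ℤ`, with `A^{-n}_x = (A^n_{f^{-n}x})⁻¹`. -/
noncomputable def cocycleZ {X : Type*} {V : Type*} [NormedAddCommGroup V] [NormedSpace ℝ V]
    (f : X ≃ X) (A : X → (V →L[ℝ] V)ˣ) : ℤ → X → (V →L[ℝ] V)ˣ
  | Int.ofNat n, x => cocycle (⇑f) A n x
  | Int.negSucc n, x => (cocycle (⇑f) A (n + 1) ((⇑f.symm)^[n + 1] x))⁻¹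

/-- The `n`-th iterate of a bijection `f`, for `n ∈ ℤ`. -/
def iterZ {X : Type*} (f : X ≃ X) : ℤ → X → X
  | Int.ofNat n, x => (⇑f)^[n] x
  | Int.negSucc n, x => (⇑f.symm)^[n + 1] x

section Cocycle

variable {X V : Type*} [NormedAddCommGroup V] [NormedSpace ℝ V] (f : X ≃ X)
  (A : X → (V →L[ℝ] V)ˣ)

theorem cocycle_succ' (n : ℕ) (x : X) :
    cocycle f A (n + 1) x = A (f^[n] x) * cocycle f A n x := by
  induction n generalizing x with
  | zero => simp [cocycle]
  | succ n ih =>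
    rw [cocycle, ih, ← Function.iterate_succ_apply, cocycle, mul_assoc]

theorem iterZ_add_one (m : ℤ) (x : X) : iterZ f (m + 1) x = iterZ f m (f x) := by
  rcases m with n | (_ | n)
  · exact Function.iterate_succ_apply f n x
  · simp [iterZ]
  · rw [show Int.negSucc (n + 1) + 1 = Int.negSucc n from rfl]
    exact congrArg (⇑f.symm)^[n + 1] (f.symm_apply_apply x).symm

theorem cocycleZ_add_one (m : ℤ) (x : X) :
    cocycleZ f A (m + 1) x = cocycleZ f A m (f x) * A x := by
  rcases m with n | (_ | n)
  · rfl
  · simp [cocycleZ, cocycle]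
  · have hx : (⇑f.symm)^[n + 2] (f x) = (⇑f.symm)^[n + 1] x := by
      rw [Function.iterate_succ_apply, Equiv.symm_apply_apply]
    rw [show Int.negSucc (n + 1) + 1 = Int.negSucc n from rfl]
    simp only [cocycleZ, hx]
    rw [cocycle_succ' f A (n + 1), f.rightInverse_symm.iterate (n + 1), mul_inv_rev,
      inv_mul_cancel_right]

theorem cocycleZ_add (n k : ℤ) (x : X) :
    cocycleZ f A (n + k) x = cocycleZ f A n (iterZ f k x) * cocycleZ f A k x := by
  induction k using Int.induction_on generalizing x with
  | zero =>
    rw [add_zero]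
    exact (mul_one (cocycleZ f A n x)).symm
  | succ k ih =>
    rw [← add_assoc, cocycleZ_add_one, ih, iterZ_add_one, cocycleZ_add_one, mul_assoc]
  | pred k ih =>
    obtain ⟨y, rfl⟩ := f.surjective x
    have h := ih y
    generalize hm : -(k : ℤ) - 1 = m
    rw [show -(k : ℤ) = m + 1 by omega, ← add_assoc, cocycleZ_add_one, cocycleZ_add_one,
      iterZ_add_one, ← mul_assoc] at h
    exact mul_right_cancel h

end Cocycle

section WeightedSums

theorem summable_and_tsum_le_mul_of_le_mul_comp {ι κ : Type*} (e : ι ≃ κ) {F : ι → ℝ}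
    {G : κ → ℝ} {C : ℝ} (hF : ∀ i, 0 ≤ F i) (hG : Summable G) (h : ∀ i, F i ≤ C * G (e i)) :
    Summable F ∧ ∑' i, F i ≤ C * ∑' j, G j := by
  have hCG : Summable fun i => C * G (e i) := (e.summable_iff.2 hG).mul_left C
  have hFsum : Summable F := hCG.of_nonneg_of_le hF h
  refine ⟨hFsum, ?_⟩
  calc ∑' i, F i ≤ ∑' i, C * G (e i) := hFsum.tsum_le_tsum h hCG
    _ = C * ∑' j, G j := by rw [tsum_mul_left, e.tsum_eq G]

theorem mul_tsum_le_tsum_of_mul_comp_le {ι κ : Type*} (e : ι ≃ κ) {F : ι → ℝ} {G : κ → ℝ}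
    {c : ℝ} (hF : Summable F) (hG : Summable G) (h : ∀ i, c * G (e i) ≤ F i) :
    c * ∑' j, G j ≤ ∑' i, F i :=
  calc c * ∑' j, G j = ∑' i, c * G (e i) := by rw [tsum_mul_left, e.tsum_eq G]
    _ ≤ ∑' i, F i := ((e.summable_iff.2 hG).mul_left c).tsum_le_tsum h hF

noncomputable def lyapunovWeight (lam ε : ℝ) (n : ℤ) : ℝ :=
  Real.exp (-2 * lam * n - ε * |(n : ℝ)|)

variable {lam ε : ℝ}

theorem lyapunovWeight_pos (n : ℤ) : 0 < lyapunovWeight lam ε n := Real.exp_pos _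

theorem lyapunovWeight_le_mul_shift (hε : 0 ≤ ε) (n k : ℤ) :
    lyapunovWeight lam ε n ≤
      Real.exp (2 * k * lam + ε * |(k : ℝ)|) * lyapunovWeight lam ε (n + k) := by
  rw [lyapunovWeight, lyapunovWeight, ← Real.exp_add, Real.exp_le_exp, Int.cast_add]
  have := mul_le_mul_of_nonneg_left (abs_add_le (n : ℝ) k) hε
  linarith

theorem mul_shift_le_lyapunovWeight (hε : 0 ≤ ε) (n k : ℤ) :
    Real.exp (2 * k * lam - ε * |(k : ℝ)|) * lyapunovWeight lam ε (n + k) ≤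
      lyapunovWeight lam ε n := by
  rw [lyapunovWeight, lyapunovWeight, ← Real.exp_add, Real.exp_le_exp, Int.cast_add]
  have := mul_le_mul_of_nonneg_left (abs_add_le ((n : ℝ) + k) (-k)) hε
  rw [add_neg_cancel_right, abs_neg] at this
  linarith

theorem tsum_shift_mul_lyapunovWeight_bounds (hε : 0 ≤ ε) {g : ℤ → ℝ} (hg : ∀ n, 0 ≤ g n)
    (hsum : Summable fun n => g n * lyapunovWeight lam ε n) (k : ℤ) :
    Summable (fun n => g (n + k) * lyapunovWeight lam ε n) ∧
      Real.exp (2 * k * lam - ε * |(k : ℝ)|) * ∑' n, g n * lyapunovWeight lam ε n ≤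
        ∑' n, g (n + k) * lyapunovWeight lam ε n ∧
      ∑' n, g (n + k) * lyapunovWeight lam ε n ≤
        Real.exp (2 * k * lam + ε * |(k : ℝ)|) * ∑' n, g n * lyapunovWeight lam ε n := by
  obtain ⟨hsum_shift, hupper⟩ := summable_and_tsum_le_mul_of_le_mul_comp (Equiv.addRight k)
    (fun n => mul_nonneg (hg _) (lyapunovWeight_pos n).le) hsum fun n =>
      (mul_le_mul_of_nonneg_left (lyapunovWeight_le_mul_shift hε n k) (hg _)).trans_eq
        (mul_left_comm _ _ _)
  refine ⟨hsum_shift, mul_tsum_le_tsum_of_mul_comp_le (Equiv.addRight k) hsum_shift hsum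
    fun n => (mul_left_comm _ _ _).trans_le
      (mul_le_mul_of_nonneg_left (mul_shift_le_lyapunovWeight hε n k) (hg _)), hupper⟩

end WeightedSums

theorem Real.exp_mul_sqrt_le_sqrt {a S T : ℝ} (h : Real.exp (2 * a) * S ≤ T) :
    Real.exp a * √S ≤ √T := by
  rw [← Real.sqrt_sq (Real.exp_pos a).le, ← Real.sqrt_mul (sq_nonneg _), ← Real.exp_nat_mul]
  exact Real.sqrt_le_sqrt (by exact_mod_cast h)

theorem Real.sqrt_le_exp_mul_sqrt {a S T : ℝ} (h : T ≤ Real.exp (2 * a) * S) :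
    √T ≤ Real.exp a * √S := by
  rw [← Real.sqrt_sq (Real.exp_pos a).le, ← Real.sqrt_mul (sq_nonneg _), ← Real.exp_nat_mul]
  exact Real.sqrt_le_sqrt (by exact_mod_cast h)

/-- comparison of the (squared) Lyapunov sums
`S_k(u) = Σ_{n∈ℤ} ‖A^n_{f^k x}(A^k_x u)‖²·e^{−2λn−ε|n|}` with `S_0(u)`: each `S_k`
converges and `e^{kλ−ε|k|}·√S_0(u) ≤ √S_k(u) ≤ e^{kλ+ε|k|}·√S_0(u)`. -/
theorem lyapunov_norm_growth_findim {X : Type*} {d : ℕ} (f : X ≃ X)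
    (A : X → (EuclideanSpace ℝ (Fin d) →L[ℝ] EuclideanSpace ℝ (Fin d))ˣ)
    (lam ε : ℝ) (hε : 0 < ε) (x : X) (u : EuclideanSpace ℝ (Fin d))
    (hsum : Summable fun n : ℤ =>
      ‖(cocycleZ f A n x).val u‖ ^ 2 * Real.exp (-2 * lam * (n : ℝ) - ε * |(n : ℝ)|)) :
    ∀ k : ℤ,
      Summable (fun n : ℤ =>
        ‖(cocycleZ f A n (iterZ f k x)).val ((cocycleZ f A k x).val u)‖ ^ 2 *
          Real.exp (-2 * lam * (n : ℝ) - ε * |(n : ℝ)|)) ∧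
      Real.exp ((k : ℝ) * lam - ε * |(k : ℝ)|) *
          Real.sqrt (∑' n : ℤ, ‖(cocycleZ f A n x).val u‖ ^ 2 *
            Real.exp (-2 * lam * (n : ℝ) - ε * |(n : ℝ)|)) ≤
        Real.sqrt (∑' n : ℤ, ‖(cocycleZ f A n (iterZ f k x)).val ((cocycleZ f A k x).val u)‖ ^ 2 *
          Real.exp (-2 * lam * (n : ℝ) - ε * |(n : ℝ)|)) ∧
      Real.sqrt (∑' n : ℤ, ‖(cocycleZ f A n (iterZ f k x)).val ((cocycleZ f A k x).val u)‖ ^ 2 *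
          Real.exp (-2 * lam * (n : ℝ) - ε * |(n : ℝ)|)) ≤
        Real.exp ((k : ℝ) * lam + ε * |(k : ℝ)|) *
          Real.sqrt (∑' n : ℤ, ‖(cocycleZ f A n x).val u‖ ^ 2 *
            Real.exp (-2 * lam * (n : ℝ) - ε * |(n : ℝ)|)) := by
  intro k
  have hshift : ∀ n : ℤ, (cocycleZ f A n (iterZ f k x)).val ((cocycleZ f A k x).val u) =
      (cocycleZ f A (n + k) x).val u := fun n => by
    rw [cocycleZ_add, Units.val_mul]
    rfl
  simp only [hshift]
  have hS₀ : 0 ≤ ∑' n : ℤ, ‖(cocycleZ f A n x).val u‖ ^ 2 * lyapunovWeight lam ε n :=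
    tsum_nonneg fun n => mul_nonneg (sq_nonneg _) (lyapunovWeight_pos n).le
  obtain ⟨hsum_k, hlower, hupper⟩ :=
    tsum_shift_mul_lyapunovWeight_bounds hε.le (g := fun n => ‖(cocycleZ f A n x).val u‖ ^ 2)
      (fun n => sq_nonneg _) hsum k
  have hεk : 0 ≤ ε * |(k : ℝ)| := mul_nonneg hε.le (abs_nonneg _)
  refine ⟨hsum_k, Real.exp_mul_sqrt_le_sqrt (le_trans ?_ hlower),
    Real.sqrt_le_exp_mul_sqrt (hupper.trans ?_)⟩
  all_goals
    refine mul_le_mul_of_nonneg_right (Real.exp_le_exp.2 ?_) hS₀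
    linarith
end
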